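/- arXiv:1608.07968 — 4 statements merged into one kernel-verified Lean document; each statement's English description precedes it below -/
import Mathlib

section
/- Let $n_1, n_2$ be positive integers and set $c = 1$. Any real solution $x$ of $\phi(x) = 0$, where $\phi(x) = \left[\tfrac{1}{n_1}x^2 + \tfrac{1}{n_2}\left(\tfrac{2n_1+2n_2+2-n_1 x}{n_2}\right)^2\right](x-2) - \tfrac{2}{n_1^2}x^2$, satisfies $2 \le x \le 2 + \tfrac{2}{n_1}$. -/
noncomputable def phi (n1 n2 : ℕ) (c : ℝ) (x : ℝ) : ℝ :=
  ((1 / (n1 : ℝ)) * x ^ 2 +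
      (c / (n2 : ℝ)) * ((2 * (n1 : ℝ) + 2 * (n2 : ℝ) + 2 - (n1 : ℝ) * x) / (n2 : ℝ)) ^ 2) *
    (x - 2) - (2 / (n1 : ℝ) ^ 2) * x ^ 2

/-!
A root of `phi` satisfies `(x² / n₁ + B) (x - 2) = 2 x² / n₁²` with `B ≥ 0`. Since `phi 0 < 0`,
the root is nonzero, so the right side is positive and `x > 2`. Dropping `B` then gives
`x² (x - 2) / n₁ ≤ 2 x² / n₁²`, i.e. `x - 2 ≤ 2 / n₁`.
-/

section CubicRoot

variable {a B x : ℝ}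

lemma two_lt_of_add_mul_sub_two_eq (ha : 0 < a) (hB : 0 ≤ B) (hx : x ≠ 0)
    (h : (1 / a * x ^ 2 + B) * (x - 2) = 2 / a ^ 2 * x ^ 2) : 2 < x := by
  have hpos : 0 < (1 / a * x ^ 2 + B) * (x - 2) := by rw [h]; positivity
  linarith [pos_of_mul_pos_right hpos (by positivity)]

lemma sub_two_le_of_add_mul_sub_two_eq (ha : 0 < a) (hB : 0 ≤ B) (hx : 2 < x)
    (h : (1 / a * x ^ 2 + B) * (x - 2) = 2 / a ^ 2 * x ^ 2) : x - 2 ≤ 2 / a := by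
  have hA : 0 < 1 / a * x ^ 2 := by positivity
  have hle : 1 / a * x ^ 2 * (x - 2) ≤ 2 / a ^ 2 * x ^ 2 := by
    rw [← h]
    exact mul_le_mul_of_nonneg_right (le_add_of_nonneg_right hB) (by linarith)
  calc x - 2 ≤ 2 / a ^ 2 * x ^ 2 / (1 / a * x ^ 2) := by rwa [le_div_iff₀ hA, mul_comm]
    _ = 2 / a := by field_simp

end CubicRoot

lemma phi_zero_neg (n1 : ℕ) {n2 : ℕ} (hn2 : 0 < n2) {c : ℝ} (hc : 0 < c) : phi n1 n2 c 0 < 0 := by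
  have hB : 0 < c / n2 * ((2 * (n1 : ℝ) + 2 * n2 + 2) / n2) ^ 2 := by positivity
  simp only [phi, mul_zero, sub_zero]
  linarith

theorem phi_root_location (n1 n2 : ℕ) (hn1 : 0 < n1) (hn2 : 0 < n2) (x : ℝ)
    (hx : phi n1 n2 1 x = 0) : 2 ≤ x ∧ x ≤ 2 + 2 / (n1 : ℝ) := by
  have ha : (0 : ℝ) < n1 := by exact_mod_cast hn1
  have hx0 : x ≠ 0 := by
    rintro rfl
    exact (phi_zero_neg n1 hn2 one_pos).ne hx
  have hroot := sub_eq_zero.mp hx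
  have hB : (0 : ℝ) ≤ 1 / n2 * ((2 * n1 + 2 * n2 + 2 - n1 * x) / n2) ^ 2 := by positivity
  have h2 := two_lt_of_add_mul_sub_two_eq ha hB hx0 hroot
  exact ⟨h2.le, by linarith [sub_two_le_of_add_mul_sub_two_eq ha hB h2 hroot]⟩
end

section
/- Let $n_1, n_2$ be positive real numbers with $n_1 \ge 3$ and $\tfrac{n_1}{\sqrt 2} \le n_2 \le n_1$. Then $d := n_1^6 + n_2^6 + 2 n_1^6 n_2 + 2 n_2^6 n_1 + n_1^6 n_2^2 + n_1^2 n_2^6 + n_1^3 n_2^3 - (8 n_1^4 n_2^4 + 3 n_1^3 n_2^5 + 3 n_1^5 n_2^3 + 2 n_1^3 n_2^4 + 2 n_1^4 n_2^3) < 0$. -/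
/-!
Put `a = n1`, `b = n2`, so `b ≤ a` and `a² ≤ 2b²`. Grouping `d` by degree,
`d = a²b²(a⁴ + b⁴ - 8a²b² - 3ab³ - 3a³b) + 2ab(a² - b²)(a³ - b³) + (a⁶ + a³b³ + b⁶)`.
The degree-8 part is at most `-5a⁴b⁴ - 3a⁵b³`, the degree-7 part at most `2a⁴b³` and the
degree-6 part at most `12a²b⁴`, so `d ≤ a⁴b³(2 - 3a) + a²b⁴(12 - 5a²) < 0` as `a ≥ 3`.
-/

lemma sq_le_two_mul_sq_of_div_sqrt_two_le {a b : ℝ} (ha : 0 ≤ a) (h : a / √2 ≤ b) :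
    a ^ 2 ≤ 2 * b ^ 2 := by
  have hab : a ≤ √2 * b := by
    rwa [div_le_iff₀ (by positivity), mul_comm] at h
  calc a ^ 2 ≤ (√2 * b) ^ 2 := pow_le_pow_left₀ ha hab 2
    _ = 2 * b ^ 2 := by rw [mul_pow, Real.sq_sqrt zero_le_two]

section Bounds

variable {a b : ℝ} (hb : 0 ≤ b) (hba : b ≤ a) (hab : a ^ 2 ≤ 2 * b ^ 2)
include hb hba hab

lemma degree_eight_le :
    a ^ 4 + b ^ 4 - 8 * a ^ 2 * b ^ 2 - 3 * a * b ^ 3 - 3 * a ^ 3 * b ≤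
      -5 * a ^ 2 * b ^ 2 - 3 * a ^ 3 * b := by
  have ha : 0 ≤ a := hb.trans hba
  have h4a : a ^ 4 ≤ 2 * a ^ 2 * b ^ 2 := by nlinarith [sq_nonneg a]
  have h4b : b ^ 4 ≤ a ^ 2 * b ^ 2 := by nlinarith [mul_le_mul hba hba hb ha, sq_nonneg b]
  nlinarith [mul_nonneg ha (pow_nonneg hb 3)]

lemma degree_seven_le :
    2 * a * b * (a ^ 2 - b ^ 2) * (a ^ 3 - b ^ 3) ≤ 2 * a ^ 4 * b ^ 3 := by
  have ha : 0 ≤ a := hb.trans hba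
  have h2 : a ^ 2 - b ^ 2 ≤ b ^ 2 := by linarith
  have h3 : a ^ 3 - b ^ 3 ≤ a ^ 3 := sub_le_self _ (pow_nonneg hb 3)
  have h3' : 0 ≤ a ^ 3 - b ^ 3 := sub_nonneg.mpr (pow_le_pow_left₀ hb hba 3)
  have key : (a ^ 2 - b ^ 2) * (a ^ 3 - b ^ 3) ≤ b ^ 2 * a ^ 3 :=
    mul_le_mul h2 h3 h3' (sq_nonneg b)
  nlinarith [mul_le_mul_of_nonneg_left key (by positivity : 0 ≤ 2 * a * b)]

lemma degree_six_le : a ^ 6 + a ^ 3 * b ^ 3 + b ^ 6 ≤ 12 * a ^ 2 * b ^ 4 := by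
  have ha : 0 ≤ a := hb.trans hba
  have h3 : b ^ 3 ≤ a ^ 3 := pow_le_pow_left₀ hb hba 3
  have h4 : a ^ 4 ≤ 4 * b ^ 4 := by nlinarith [sq_nonneg a]
  calc a ^ 6 + a ^ 3 * b ^ 3 + b ^ 6 ≤ 3 * a ^ 6 := by
        nlinarith [mul_le_mul_of_nonneg_left h3 (pow_nonneg ha 3), pow_le_pow_left₀ hb hba 6]
    _ = 3 * a ^ 2 * a ^ 4 := by ring
    _ ≤ 3 * a ^ 2 * (4 * b ^ 4) := by gcongr
    _ = 12 * a ^ 2 * b ^ 4 := by ring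

end Bounds

theorem discriminant_neg (n1 n2 : ℝ) (hn1 : 3 ≤ n1) (hlo : n1 / Real.sqrt 2 ≤ n2)
    (hhi : n2 ≤ n1) :
    n1 ^ 6 + n2 ^ 6 + 2 * n1 ^ 6 * n2 + 2 * n2 ^ 6 * n1 + n1 ^ 6 * n2 ^ 2 +
        n1 ^ 2 * n2 ^ 6 + n1 ^ 3 * n2 ^ 3 -
      (8 * n1 ^ 4 * n2 ^ 4 + 3 * n1 ^ 3 * n2 ^ 5 + 3 * n1 ^ 5 * n2 ^ 3 +
        2 * n1 ^ 3 * n2 ^ 4 + 2 * n1 ^ 4 * n2 ^ 3) < 0 := by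
  have hsq : n1 ^ 2 ≤ 2 * n2 ^ 2 := sq_le_two_mul_sq_of_div_sqrt_two_le (by linarith) hlo
  have hn2 : 0 < n2 := lt_of_lt_of_le (by positivity) hlo
  have h8 := mul_le_mul_of_nonneg_left (degree_eight_le hn2.le hhi hsq)
    (by positivity : 0 ≤ n1 ^ 2 * n2 ^ 2)
  have h7 := degree_seven_le hn2.le hhi hsq
  have h6 := degree_six_le hn2.le hhi hsq
  have hneg : n1 ^ 4 * n2 ^ 3 * (2 - 3 * n1) + n1 ^ 2 * n2 ^ 4 * (12 - 5 * n1 ^ 2) < 0 := by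
    have h1 : 2 - 3 * n1 < 0 := by linarith
    have h2 : 12 - 5 * n1 ^ 2 < 0 := by nlinarith
    have := mul_neg_of_pos_of_neg (by positivity : 0 < n1 ^ 4 * n2 ^ 3) h1
    have := mul_neg_of_pos_of_neg (by positivity : 0 < n1 ^ 2 * n2 ^ 4) h2
    linarith
  linear_combination h8 + h7 + h6 + hneg
end

section
/- For $n_1 = n_2 = 1$ and $c = 1$, the cubic polynomial $\phi(x) = \left[x^2 + (6 - x)^2\right](x-2) - 2x^2$ has exactly one real root. -/
theorem sub_mul_sq_add_eq_zero_iff {K : Type*} [Field K] [LinearOrder K] [IsStrictOrderedRing K]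
    {a r x : K} (ha : 0 < a) : (x - r) * ((x - r) ^ 2 + a) = 0 ↔ x = r := by
  have hpos : (x - r) ^ 2 + a ≠ 0 := by positivity
  rw [mul_eq_zero, or_iff_left hpos, sub_eq_zero]

theorem calabiEckmann_cubic_eq (x : ℝ) :
    (x ^ 2 + (6 - x) ^ 2) * (x - 2) - 2 * x ^ 2 = 2 * ((x - 3) * ((x - 3) ^ 2 + 3)) := by
  ring

theorem calabi_eckmann_unique_root :
    ∃! x : ℝ, (x ^ 2 + (6 - x) ^ 2) * (x - 2) - 2 * x ^ 2 = 0 := by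
  simp_rw [calabiEckmann_cubic_eq, mul_eq_zero_iff_left (two_ne_zero' ℝ),
    sub_mul_sq_add_eq_zero_iff (three_pos (α := ℝ))]
  exact existsUnique_eq
end

section
/- Let $n_1, n_2 \ge 1$ and $c > 0$. The system of equations in $(x,y,z) \in \mathbb{R}^3$ given by $z = \tfrac{1}{n_1}x^2 + \tfrac{c}{n_2}y^2$, $z(x-2) = \tfrac{2}{n_1^2}x^2$, $z(y-2) = \tfrac{2c}{n_2^2}y^2$ with $z \ne 0$ is equivalent to the system $z = \tfrac{1}{n_1}x^2 + \tfrac{c}{n_2}y^2$, $z(x-2) = \tfrac{2}{n_1^2}x^2$, $n_1 x + n_2 y = 2n_1 + 2n_2 + 2$. -/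
/-!
Weighting the three equations by `n₁`, `n₂` and `-2` and adding them cancels every quadratic
term, leaving `z (n₁ x + n₂ y - 2n₁ - 2n₂ - 2) = 0`. Given the first two equations, the third is
therefore equivalent to this linear one as soon as `z ≠ 0`.
-/

lemma mul_linear_residual_eq {a b c x y z : ℝ} (ha : a ≠ 0) (hb : b ≠ 0) :
    z * (a * x + b * y - (2 * a + 2 * b + 2)) =
      a * (z * (x - 2) - 2 / a ^ 2 * x ^ 2) + b * (z * (y - 2) - 2 * c / b ^ 2 * y ^ 2)
        + 2 * (1 / a * x ^ 2 + c / b * y ^ 2 - z) := by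
  field_simp
  ring

lemma third_equation_iff_linear {a b c x y z : ℝ} (ha : a ≠ 0) (hb : b ≠ 0) (hz : z ≠ 0)
    (h₁ : z = 1 / a * x ^ 2 + c / b * y ^ 2) (h₂ : z * (x - 2) = 2 / a ^ 2 * x ^ 2) :
    z * (y - 2) = 2 * c / b ^ 2 * y ^ 2 ↔ a * x + b * y = 2 * a + 2 * b + 2 := by
  have key : z * (a * x + b * y - (2 * a + 2 * b + 2)) =
      b * (z * (y - 2) - 2 * c / b ^ 2 * y ^ 2) := by
    rw [mul_linear_residual_eq (c := c) ha hb, ← h₁, h₂]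
    ring
  rw [← sub_eq_zero, ← mul_eq_zero_iff_left hb, ← key, mul_eq_zero_iff_left hz, sub_eq_zero]

theorem system_reduction_general (n1 n2 : ℕ) (hn1 : 1 ≤ n1) (hn2 : 1 ≤ n2) (c : ℝ)
    (x y z : ℝ) (hz : z ≠ 0) :
    (z = (1 / (n1 : ℝ)) * x ^ 2 + (c / (n2 : ℝ)) * y ^ 2 ∧
        z * (x - 2) = (2 / (n1 : ℝ) ^ 2) * x ^ 2 ∧
        z * (y - 2) = (2 * c / (n2 : ℝ) ^ 2) * y ^ 2) ↔
      (z = (1 / (n1 : ℝ)) * x ^ 2 + (c / (n2 : ℝ)) * y ^ 2 ∧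
        z * (x - 2) = (2 / (n1 : ℝ) ^ 2) * x ^ 2 ∧
        (n1 : ℝ) * x + (n2 : ℝ) * y = 2 * (n1 : ℝ) + 2 * (n2 : ℝ) + 2) := by
  have hn1' : (n1 : ℝ) ≠ 0 := by positivity
  have hn2' : (n2 : ℝ) ≠ 0 := by positivity
  exact and_congr_right fun h₁ => and_congr_right fun h₂ =>
    third_equation_iff_linear hn1' hn2' hz h₁ h₂

theorem system_reduction (n1 n2 : ℕ) (hn1 : 1 ≤ n1) (hn2 : 1 ≤ n2) (c : ℝ) (hc : 0 < c)
    (x y z : ℝ) (hz : z ≠ 0) :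
    (z = (1 / (n1 : ℝ)) * x ^ 2 + (c / (n2 : ℝ)) * y ^ 2 ∧
        z * (x - 2) = (2 / (n1 : ℝ) ^ 2) * x ^ 2 ∧
        z * (y - 2) = (2 * c / (n2 : ℝ) ^ 2) * y ^ 2) ↔
      (z = (1 / (n1 : ℝ)) * x ^ 2 + (c / (n2 : ℝ)) * y ^ 2 ∧
        z * (x - 2) = (2 / (n1 : ℝ) ^ 2) * x ^ 2 ∧
        (n1 : ℝ) * x + (n2 : ℝ) * y = 2 * (n1 : ℝ) + 2 * (n2 : ℝ) + 2) :=
  system_reduction_general n1 n2 hn1 hn2 c x y z hz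
end
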